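/- arXiv:1407.4355 — 7 statements merged into one kernel-verified Lean document; each statement's English description precedes it below -/
import Mathlib

section
/- For every k > 0, (k+2)·ln(1+k)/(2k) > 1; equivalently, the flat-rate optimal revenue (N/4)·G·ln(1+k) strictly exceeds the usage-based optimal revenue N·G·k/(2(k+2)). -/
open Real

theorem flat_rate_outperforms_usage (N G k : ℝ) (hN : 0 < N) (hG : 0 < G) (hk : 0 < k) :
    (k + 2) * Real.log (1 + k) / (2 * k) > 1 ∧
    N / 4 * G * Real.log (1 + k) > N * G * k / (2 * (k + 2)) := by
  have hk2 : 0 < k + 2 := by linarith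
  have hlog_bound : 2 * k < (k + 2) * log (1 + k) := by
    have := (div_lt_iff₀ hk2).mp (lt_log_one_add_of_pos hk)
    linarith
  constructor
  · rwa [gt_iff_lt, one_lt_div (by positivity)]
  · rw [gt_iff_lt, div_lt_iff₀ (by positivity)]
    have hNG : 0 < N * G := mul_pos hN hG
    nlinarith [mul_lt_mul_of_pos_left hlog_bound hNG]
end

section
/- The function r(k) = (k+2)·ln(1+k)/(2k) is strictly increasing on (0, ∞), i.e., its derivative (k(k+2)/(k+1) − 2·ln(1+k))/(2k²) is positive for all k > 0. -/
/-!
The numerator of the derivative is `k (k + 2) / (k + 1) - 2 log (1 + k) = x - x⁻¹ - 2 log x`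
with `x = 1 + k`, and `x - x⁻¹ = 2 sinh (log x)`; so its positivity for `x > 1` is the
inequality `t < sinh t` for `t > 0`.
-/

open Real Set

lemma two_mul_log_lt_sub_inv_self {x : ℝ} (hx : 1 < x) : 2 * log x < x - x⁻¹ := by
  have h := self_lt_sinh_iff.mpr (log_pos hx)
  rw [sinh_log (by linarith)] at h
  linarith

lemma revenue_ratio_deriv_pos {k : ℝ} (hk : 0 < k) :
    0 < (k * (k + 2) / (k + 1) - 2 * log (1 + k)) / (2 * k ^ 2) := by
  have hnum : k * (k + 2) / (k + 1) = (1 + k) - (1 + k)⁻¹ := by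
    field_simp
    ring
  have := two_mul_log_lt_sub_inv_self (by linarith : 1 < 1 + k)
  exact div_pos (by linarith) (by positivity)

lemma hasDerivAt_revenue_ratio {k : ℝ} (hk : 0 < k) :
    HasDerivAt (fun k : ℝ => (k + 2) * log (1 + k) / (2 * k))
      ((k * (k + 2) / (k + 1) - 2 * log (1 + k)) / (2 * k ^ 2)) k := by
  have hlog := ((hasDerivAt_id' k).const_add 1).log (by positivity)
  have := (((hasDerivAt_id' k).add_const 2).fun_mul hlog).fun_div
    ((hasDerivAt_id' k).const_mul 2) (by positivity)
  refine this.congr_deriv ?_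
  field_simp
  ring

theorem revenue_ratio_increasing :
    StrictMonoOn (fun k : ℝ => (k + 2) * Real.log (1 + k) / (2 * k)) (Ioi (0:ℝ)) ∧
    ∀ k : ℝ, 0 < k → (k * (k + 2) / (k + 1) - 2 * Real.log (1 + k)) / (2 * k ^ 2) > 0 := by
  refine ⟨?_, fun k hk => revenue_ratio_deriv_pos hk⟩
  refine strictMonoOn_of_hasDerivWithinAt_pos (convex_Ioi 0)
    (f' := fun k => (k * (k + 2) / (k + 1) - 2 * log (1 + k)) / (2 * k ^ 2))
    (fun k hk => (hasDerivAt_revenue_ratio hk).continuousAt.continuousWithinAt) ?_ ?_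
  · intro k hk
    rw [interior_Ioi] at hk
    exact (hasDerivAt_revenue_ratio hk).hasDerivWithinAt
  · intro k hk
    rw [interior_Ioi] at hk
    exact revenue_ratio_deriv_pos hk
end

section
/- For any p with ln(2)/2 < p < 1/2, the equation θ·ln(θ/p) − θ + p − (θ − 1/2)·ln(2) = 0 has a unique solution θ_th in the interval (1/2, 2p), and moreover the function θ ↦ θ·ln(θ/p) − θ + p − (θ − 1/2)·ln(2) is strictly decreasing on (0, 2p). -/
open Real Set

/-!
The derivative of `θ ↦ θ ln(θ/p) - θ + p - (θ - 1/2) ln 2` is `ln(θ / 2p)`, negative on `(0, 2p)`.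
At `θ = 1/2` the value is `p - 1/2 - ln(2p)/2 > 0` by `ln y < y - 1`, and at `θ = 2p` it is
`ln 2 / 2 - p < 0`; the intermediate value theorem and strict monotonicity give the unique zero.
-/

/-- Its zero in `θ` is the threshold type `θ_th`. -/
noncomputable def priceGap (p θ : ℝ) : ℝ :=
  θ * log (θ / p) - θ + p - (θ - 1 / 2) * log 2

lemma hasDerivAt_priceGap {p x : ℝ} (hp : p ≠ 0) (hx : x ≠ 0) :
    HasDerivAt (priceGap p) (log (x / p) - log 2) x := by
  have hlog : HasDerivAt (fun θ => log (θ / p)) (1 / x) x :=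
    (((hasDerivAt_id' x).div_const p).log (div_ne_zero hx hp)).congr_deriv (by field_simp)
  refine (((((hasDerivAt_id' x).mul hlog).sub (hasDerivAt_id' x)).add_const p).sub
    (((hasDerivAt_id' x).sub_const (1 / 2)).mul_const (log 2))).congr_deriv ?_
  rw [mul_one_div_cancel hx]
  ring

lemma continuousOn_priceGap {p : ℝ} (hp : p ≠ 0) : ContinuousOn (priceGap p) (Ioi 0) :=
  fun _ hx => (hasDerivAt_priceGap hp (ne_of_gt hx)).continuousAt.continuousWithinAt

lemma priceGap_strictAntiOn {p : ℝ} (hp : 0 < p) : StrictAntiOn (priceGap p) (Ioc 0 (2 * p)) := by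
  apply strictAntiOn_of_deriv_neg (convex_Ioc 0 (2 * p))
    ((continuousOn_priceGap hp.ne').mono Ioc_subset_Ioi_self)
  intro x hx
  rw [interior_Ioc] at hx
  rw [(hasDerivAt_priceGap hp.ne' hx.1.ne').deriv, sub_neg]
  exact log_lt_log (div_pos hx.1 hp) ((div_lt_iff₀ hp).2 hx.2)

lemma priceGap_half_pos {p : ℝ} (hp : 0 < p) (hp' : p ≠ 1 / 2) : 0 < priceGap p (1 / 2) := by
  have hlog : log (2 * p) < 2 * p - 1 :=
    log_lt_sub_one_of_pos (by positivity) fun h => hp' (by linarith)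
  have hinv : log (1 / 2 / p) = -log (2 * p) := by
    rw [← log_inv]
    congr 1
    field_simp
  simp only [priceGap, hinv]
  linarith

lemma priceGap_two_mul {p : ℝ} (hp : p ≠ 0) : priceGap p (2 * p) = log 2 / 2 - p := by
  simp only [priceGap, mul_div_cancel_right₀ 2 hp]
  ring

lemma existsUnique_zero_of_strictAntiOn {f : ℝ → ℝ} {a b : ℝ} (hab : a ≤ b)
    (hf : ContinuousOn f (Icc a b)) (hanti : StrictAntiOn f (Icc a b)) (ha : 0 < f a)
    (hb : f b < 0) : ∃! x, x ∈ Ioo a b ∧ f x = 0 := by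
  obtain ⟨x, hx, hfx⟩ := intermediate_value_Ioo' hab hf ⟨hb, ha⟩
  refine ⟨x, ⟨hx, hfx⟩, fun y ⟨hy, hfy⟩ => ?_⟩
  exact hanti.injOn (Ioo_subset_Icc_self hy) (Ioo_subset_Icc_self hx) (hfy.trans hfx.symm)

theorem medium_price_threshold_exists_unique (p : ℝ)
    (hp1 : Real.log 2 / 2 < p) (hp2 : p < 1 / 2) :
    let f : ℝ → ℝ := fun θ => θ * Real.log (θ / p) - θ + p - (θ - 1 / 2) * Real.log 2
    (∃! θ : ℝ, θ ∈ Ioo (1 / 2 : ℝ) (2 * p) ∧ f θ = 0) ∧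
    StrictAntiOn f (Ioo (0:ℝ) (2 * p)) := by
  change (∃! θ, θ ∈ Ioo (1 / 2 : ℝ) (2 * p) ∧ priceGap p θ = 0) ∧
    StrictAntiOn (priceGap p) (Ioo 0 (2 * p))
  have hp : 0 < p := lt_trans (by positivity [log_pos one_lt_two]) hp1
  have hhalf : 1 / 2 < 2 * p := by linarith [log_two_gt_d9]
  have hanti := priceGap_strictAntiOn hp
  have hIcc : Icc (1 / 2) (2 * p) ⊆ Ioc 0 (2 * p) := Icc_subset_Ioc (by norm_num) le_rfl
  refine ⟨existsUnique_zero_of_strictAntiOn hhalf.le ?_ (hanti.mono hIcc)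
    (priceGap_half_pos hp hp2.ne) ?_, hanti.mono Ioo_subset_Ioc_self⟩
  · exact (continuousOn_priceGap hp.ne').mono fun x hx => (hIcc hx).1
  · rw [priceGap_two_mul hp.ne']
    linarith
end

section
/- Suppose p ≤ ln(2)/2 and define Δu(θ,p) = θ·ln(θ/p) − θ + p − (θ − 1/2)·ln(2) for θ ∈ [1/2, 2p]. Then Δu(1/2, p) > 0 and Δu(2p, p) ≥ 0, and Δu is strictly decreasing in θ on (1/2, 2p); consequently Δu(θ,p) ≥ 0 for all θ ∈ [1/2, 2p]. -/
open Real Set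

/- Since `θ log (θ / p) - θ log 2 = θ log (θ / 2p)`, the gain `Δu` is, up to an additive
constant, `θ ↦ θ log (θ / 2p) - θ`, whose derivative `log (θ / 2p)` is negative on `(0, 2p)`.
Hence `Δu` is smallest at `θ = 2p`, where it equals `log 2 / 2 - p ≥ 0`. At `θ = 1/2` it equals
`(2p - 1 - log (2p)) / 2`, positive because `log x < x - 1` for `x ≠ 1`. -/

theorem hasDerivAt_mul_log_div_sub_self {c x : ℝ} (hc : c ≠ 0) (hx : x ≠ 0) :
    HasDerivAt (fun θ => θ * log (θ / c) - θ) (log (x / c)) x := by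
  have hlog : HasDerivAt (fun θ => log (θ / c)) (1 / c / (x / c)) x :=
    ((hasDerivAt_id' x).div_const c).log (div_ne_zero hx hc)
  have h : HasDerivAt (fun θ => θ * log (θ / c) - θ)
      (1 * log (x / c) + x * (1 / c / (x / c)) - 1) x :=
    ((hasDerivAt_id' x).mul hlog).sub (hasDerivAt_id' x)
  convert h using 1
  field_simp
  ring

theorem strictAntiOn_mul_log_div_sub_self {c : ℝ} (hc : 0 < c) :
    StrictAntiOn (fun θ => θ * log (θ / c) - θ) (Ioc 0 c) := by
  have hderiv (x : ℝ) (hx : 0 < x) := hasDerivAt_mul_log_div_sub_self hc.ne' hx.ne'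
  refine strictAntiOn_of_deriv_neg (convex_Ioc 0 c)
    (fun x hx => (hderiv x hx.1).continuousAt.continuousWithinAt) fun x hx => ?_
  rw [interior_Ioc] at hx
  rw [(hderiv x hx.1).deriv]
  exact log_neg (div_pos hx.1 hc) ((div_lt_one hc).2 hx.2)

theorem low_price_regime_all_switch (p : ℝ) (hp : 0 < p) (hp' : p ≤ Real.log 2 / 2) :
    let Δu : ℝ → ℝ := fun θ => θ * Real.log (θ / p) - θ + p - (θ - 1 / 2) * Real.log 2
    Δu (1 / 2) > 0 ∧ Δu (2 * p) ≥ 0 ∧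
    StrictAntiOn Δu (Ioo (1 / 2 : ℝ) (2 * p)) ∧
    ∀ θ ∈ Icc (1 / 2 : ℝ) (2 * p), 0 ≤ Δu θ := by
  intro Δu
  have hΔu (θ : ℝ) : Δu θ = (θ * log (θ / (2 * p)) - θ) + (p + log 2 / 2) := by
    rcases eq_or_ne θ 0 with rfl | hθ
    · simp only [Δu]; ring
    · simp only [Δu]
      rw [mul_comm 2 p, ← div_div, log_div (div_ne_zero hθ hp.ne') two_ne_zero]
      ring
  have hanti : StrictAntiOn Δu (Ioc 0 (2 * p)) := fun a ha b hb hab => by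
    simpa only [hΔu, add_lt_add_iff_right] using
      strictAntiOn_mul_log_div_sub_self (by positivity) ha hb hab
  have hleft : Δu (1 / 2) > 0 := by
    have h2p : 2 * p < 1 := by linarith [log_two_lt_d9]
    have hlog := log_lt_sub_one_of_pos (by positivity) h2p.ne
    have : (1 / 2 : ℝ) / p = (2 * p)⁻¹ := by field_simp
    simp only [Δu, this, log_inv]
    linarith
  have hright : Δu (2 * p) ≥ 0 := by
    simp only [Δu, mul_div_cancel_right₀ 2 hp.ne']
    linarith
  refine ⟨hleft, hright, hanti.mono fun θ hθ => ⟨by linarith [hθ.1], hθ.2.le⟩, fun θ hθ => ?_⟩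
  exact hright.trans
    (hanti.antitoneOn ⟨by linarith [hθ.1], hθ.2⟩ ⟨by positivity, le_rfl⟩ hθ.2)
end

section
/- Suppose p > 1/2 (high price regime, k = 1) and define Δu(θ,p) = θ·ln(θ/p) − θ + p − (θ − 1/2)·ln(2) for θ ∈ [p, 1]. Then Δu(p,p) < 0 and ∂Δu/∂θ = ln(θ/(2p)) < 0 on [p,1], so Δu(θ,p) < 0 for all θ ∈ [p, 1]. -/
/-!
The gain `Δu = switchGain p` has derivative `log (θ / (2p))`, which is negative for `θ < 2p`; since `p > 1/2`, the
whole interval `[p, 1]` lies below `2p`, so the gain is largest at `θ = p`, where it equals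
`-(p - 1/2) log 2 < 0`.
-/

open Real Set

noncomputable def switchGain (p θ : ℝ) : ℝ :=
  θ * log (θ / p) - θ + p - (θ - 1 / 2) * log 2

section

variable {p θ : ℝ}

theorem switchGain_self (hp : p ≠ 0) : switchGain p p = -((p - 1 / 2) * log 2) := by
  simp only [switchGain, div_self hp, log_one]
  ring

theorem switchGain_self_neg (hp : 1 / 2 < p) : switchGain p p < 0 := by
  rw [switchGain_self (by linarith)]
  exact neg_neg_of_pos (mul_pos (by linarith) (log_pos one_lt_two))

theorem hasDerivAt_switchGain (hp : p ≠ 0) (hθ : θ ≠ 0) :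
    HasDerivAt (switchGain p) (log (θ / (2 * p))) θ := by
  have hlog : HasDerivAt (fun x => log (x / p)) (1 / p / (θ / p)) θ :=
    ((hasDerivAt_id θ).div_const p).log (div_ne_zero hθ hp)
  have hgain : HasDerivAt (switchGain p)
      (1 * log (θ / p) + θ * (1 / p / (θ / p)) - 1 - 1 * log 2) θ :=
    ((((hasDerivAt_id θ).mul hlog).sub (hasDerivAt_id θ)).add_const p).sub
      (((hasDerivAt_id θ).sub_const (1 / 2)).mul_const (log 2))
  refine hgain.congr_deriv ?_
  rw [mul_comm 2 p, ← div_div, log_div (div_ne_zero hθ hp) two_ne_zero]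
  field_simp
  ring

theorem log_div_two_mul_neg (hθ : 0 < θ) (hθp : θ < 2 * p) : log (θ / (2 * p)) < 0 :=
  log_neg (div_pos hθ (hθ.trans hθp)) ((div_lt_one (hθ.trans hθp)).mpr hθp)

theorem strictAntiOn_switchGain (hp : 0 < p) : StrictAntiOn (switchGain p) (Icc p (2 * p)) := by
  have hderiv : ∀ x ∈ Icc p (2 * p), HasDerivAt (switchGain p) (log (x / (2 * p))) x :=
    fun x hx => hasDerivAt_switchGain hp.ne' (hp.trans_le hx.1).ne'
  refine strictAntiOn_of_deriv_neg (convex_Icc _ _)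
    (fun x hx => (hderiv x hx).continuousAt.continuousWithinAt) fun x hx => ?_
  rw [interior_Icc] at hx
  rw [(hderiv x (Ioo_subset_Icc_self hx)).deriv]
  exact log_div_two_mul_neg (hp.trans hx.1) hx.2

end

theorem high_price_regime_no_switch (p : ℝ) (hp : 1 / 2 < p) :
    let Δu : ℝ → ℝ := fun θ => θ * Real.log (θ / p) - θ + p - (θ - 1 / 2) * Real.log 2
    Δu p < 0 ∧
    (∀ θ ∈ Icc p 1, HasDerivAt Δu (Real.log (θ / (2 * p))) θ ∧
      Real.log (θ / (2 * p)) < 0) ∧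
    ∀ θ ∈ Icc p 1, Δu θ < 0 := by
  intro Δu
  have hp0 : 0 < p := by linarith
  have hIcc : Icc p 1 ⊆ Icc p (2 * p) := Icc_subset_Icc_right (by linarith)
  refine ⟨switchGain_self_neg hp, fun θ hθ => ⟨?_, ?_⟩, fun θ hθ => ?_⟩
  · exact hasDerivAt_switchGain hp0.ne' (hp0.trans_le hθ.1).ne'
  · exact log_div_two_mul_neg (hp0.trans_le hθ.1) (by linarith [hθ.2])
  · have hpp : p ∈ Icc p (2 * p) := left_mem_Icc.mpr (by linarith)
    exact ((strictAntiOn_switchGain hp0).antitoneOn hpp (hIcc hθ) hθ.1).trans_lt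
      (switchGain_self_neg hp)
end

section
/- Let G₁ > G₂ > 0. The system P₁ = (G₁−G₂)·ln(2)/2 + P₂/2 and P₂ = G₂·P₁/(2G₁) has the unique solution P₁* = 2·ln(2)·G₁·(G₁−G₂)/(4G₁−G₂) and P₂* = ln(2)·G₂·(G₁−G₂)/(4G₁−G₂); moreover both P₁* and P₂* are strictly less than (G₁+G₂)·ln(2)/2. -/
/-!
Both best responses are affine, so the equilibrium is the fixed point of an affine map with slope
`½ · G₂/(2G₁) < 1`, which is unique and given in closed form. Since `P₂* = G₂/(2G₁) · P₁* < P₁*`,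
it remains to compare `P₁*` with the monopoly price; their difference is
`ln 2 · G₂ (7G₁ − G₂) / (2(4G₁ − G₂)) > 0`.
-/

open Real

theorem affine_bestResponse_fixedPoint_iff {a b c x y : ℝ} (hbc : b * c ≠ 1) :
    (x = a + b * y ∧ y = c * x) ↔ (x = a / (1 - b * c) ∧ y = c * (a / (1 - b * c))) := by
  have hne : 1 - b * c ≠ 0 := sub_ne_zero.2 hbc.symm
  constructor
  · rintro ⟨hx, rfl⟩
    have hx' : x = a / (1 - b * c) := by
      rw [eq_div_iff hne]
      linear_combination hx
    exact ⟨hx', by rw [hx']⟩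
  · rintro ⟨rfl, rfl⟩
    refine ⟨?_, rfl⟩
    field_simp
    ring

theorem duopoly_leaderPrice_lt_monopolyPrice {G₁ G₂ : ℝ} (hG₂ : 0 < G₂) (h : G₂ < 4 * G₁) :
    2 * log 2 * G₁ * (G₁ - G₂) / (4 * G₁ - G₂) < (G₁ + G₂) * log 2 / 2 := by
  have hD : 0 < 4 * G₁ - G₂ := sub_pos.2 h
  have hgap : 0 < 7 * G₁ - G₂ := by linarith
  have hdiff : (G₁ + G₂) * log 2 / 2 - 2 * log 2 * G₁ * (G₁ - G₂) / (4 * G₁ - G₂) =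
      log 2 * G₂ * (7 * G₁ - G₂) / (2 * (4 * G₁ - G₂)) := by
    rw [div_sub_div _ _ two_ne_zero hD.ne']
    ring
  have : 0 < log 2 * G₂ * (7 * G₁ - G₂) / (2 * (4 * G₁ - G₂)) := by
    have := log_pos one_lt_two
    positivity
  linarith

theorem asymmetric_duopoly_equilibrium_prices (G₁ G₂ : ℝ) (hG : G₁ > G₂) (hG2 : 0 < G₂) :
    (∀ P₁ P₂ : ℝ,
      (P₁ = (G₁ - G₂) * Real.log 2 / 2 + P₂ / 2 ∧ P₂ = G₂ * P₁ / (2 * G₁)) ↔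
      (P₁ = 2 * Real.log 2 * G₁ * (G₁ - G₂) / (4 * G₁ - G₂) ∧
       P₂ = Real.log 2 * G₂ * (G₁ - G₂) / (4 * G₁ - G₂))) ∧
    2 * Real.log 2 * G₁ * (G₁ - G₂) / (4 * G₁ - G₂) < (G₁ + G₂) * Real.log 2 / 2 ∧
    Real.log 2 * G₂ * (G₁ - G₂) / (4 * G₁ - G₂) < (G₁ + G₂) * Real.log 2 / 2 := by
  have hG₁ : 0 < G₁ := hG2.trans hG
  have hgap : 0 < G₁ - G₂ := sub_pos.2 hG
  have hD : 0 < 4 * G₁ - G₂ := by linarith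
  have hlog : 0 < log 2 := log_pos one_lt_two
  have hP₁star : 2 * log 2 * G₁ * (G₁ - G₂) / (4 * G₁ - G₂) =
      (G₁ - G₂) * log 2 / 2 / (1 - 2⁻¹ * (G₂ / (2 * G₁))) := by
    field_simp
    ring
  have hP₂star : log 2 * G₂ * (G₁ - G₂) / (4 * G₁ - G₂) =
      G₂ / (2 * G₁) * (2 * log 2 * G₁ * (G₁ - G₂) / (4 * G₁ - G₂)) := by
    field_simp
  have hslope : G₂ / (2 * G₁) < 1 := (div_lt_one (by positivity)).2 (by linarith)
  have hbc : 2⁻¹ * (G₂ / (2 * G₁)) ≠ 1 := by linarith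
  have hP₁star_lt := duopoly_leaderPrice_lt_monopolyPrice hG2 (by linarith : G₂ < 4 * G₁)
  refine ⟨fun P₁ P₂ => ?_, hP₁star_lt, ?_⟩
  · rw [show P₂ / 2 = 2⁻¹ * P₂ by ring, show G₂ * P₁ / (2 * G₁) = G₂ / (2 * G₁) * P₁ by ring,
      hP₂star, hP₁star, affine_bestResponse_fixedPoint_iff hbc]
  · rw [hP₂star]
    exact (mul_lt_of_lt_one_left (by positivity) hslope).trans hP₁star_lt
end

section
/- At the asymmetric duopoly equilibrium prices P₁* = 2·ln(2)·G₁·(G₁−G₂)/(4G₁−G₂) and P₂* = ln(2)·G₂·(G₁−G₂)/(4G₁−G₂) with G₁ > G₂ > 0, the chain of inequalities 0 < P₂*/(G₂·ln 2) < P₁*/(G₁·ln 2) < (P₁*−P₂*)/((G₁−G₂)·ln 2) < 1 holds; moreover the total served fraction of users 1 − P₂*/(G₂·ln 2) exceeds 3/4, and provider 1's share 1 − (P₁*−P₂*)/((G₁−G₂)·ln 2) exceeds 1/2. -/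
open Real Set

theorem asymmetric_duopoly_market_shares (G₁ G₂ P₁ P₂ : ℝ) (hG : G₁ > G₂) (hG2 : 0 < G₂)
    (hP₁ : P₁ = 2 * Real.log 2 * G₁ * (G₁ - G₂) / (4 * G₁ - G₂))
    (hP₂ : P₂ = Real.log 2 * G₂ * (G₁ - G₂) / (4 * G₁ - G₂)) :
    (0 < P₂ / (G₂ * Real.log 2) ∧
     P₂ / (G₂ * Real.log 2) < P₁ / (G₁ * Real.log 2) ∧
     P₁ / (G₁ * Real.log 2) < (P₁ - P₂) / ((G₁ - G₂) * Real.log 2) ∧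
     (P₁ - P₂) / ((G₁ - G₂) * Real.log 2) < 1) ∧
    1 - P₂ / (G₂ * Real.log 2) > 3 / 4 ∧
    1 - (P₁ - P₂) / ((G₁ - G₂) * Real.log 2) > 1 / 2 := by
  have hL : (0:ℝ) < Real.log 2 := Real.log_pos (by norm_num)
  have hG1 : 0 < G₁ := lt_trans hG2 hG
  have hD : 0 < 4 * G₁ - G₂ := by linarith
  have hGG : 0 < G₁ - G₂ := by linarith
  have e2 : P₂ / (G₂ * Real.log 2) = (G₁ - G₂) / (4 * G₁ - G₂) := by
    rw [hP₂]; field_simp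
  have e1 : P₁ / (G₁ * Real.log 2) = 2 * (G₁ - G₂) / (4 * G₁ - G₂) := by
    rw [hP₁]; field_simp
  have e3 : (P₁ - P₂) / ((G₁ - G₂) * Real.log 2) = (2 * G₁ - G₂) / (4 * G₁ - G₂) := by
    rw [hP₁, hP₂]; field_simp
  rw [e1, e2, e3]
  refine ⟨⟨by positivity, ?_, ?_, ?_⟩, ?_, ?_⟩
  · rw [div_lt_div_iff₀ hD hD]; nlinarith
  · rw [div_lt_div_iff₀ hD hD]; nlinarith
  · rw [div_lt_one hD]; linarith
  · have h : (G₁ - G₂) / (4 * G₁ - G₂) < 1 / 4 := by rw [div_lt_iff₀ hD]; nlinarith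
    linarith
  · have h : (2 * G₁ - G₂) / (4 * G₁ - G₂) < 1 / 2 := by rw [div_lt_iff₀ hD]; nlinarith
    linarith
end
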